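/- Let λ ∈ ℕ and define ψ_λ : DM(λ) → M(λ) by ψ_λ(v_i*) = 0 for i ≤ λ and ψ_λ(v_i*) = (-1)^i C(i, i-λ-1) v_i for i ≥ λ+1, where C(i,k) is the usual binomial coefficient. Then ψ_λ is a homomorphism of sl_2-modules. -/

import Mathlib

/-- f·v_i = (i+1) v_{i+1} on the Verma module M(λ) with basis v_i = single i 1. -/
noncomputable def Fop : (ℕ →₀ ℂ) →ₗ[ℂ] (ℕ →₀ ℂ) :=
  Finsupp.lsum ℂ fun i => ((i : ℂ) + 1) • Finsupp.lsingle (i + 1)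

/-- e·v_i = (λ+1-i) v_{i-1} (with v_{-1} = 0). -/
noncomputable def Eop (lam : ℂ) : (ℕ →₀ ℂ) →ₗ[ℂ] (ℕ →₀ ℂ) :=
  Finsupp.lsum ℂ fun i => if i = 0 then 0 else (lam + 1 - i) • Finsupp.lsingle (i - 1)

/-- h·v_i = (λ-2i) v_i. -/
noncomputable def Hop (lam : ℂ) : (ℕ →₀ ℂ) →ₗ[ℂ] (ℕ →₀ ℂ) :=
  Finsupp.lsum ℂ fun i => (lam - 2 * i) • Finsupp.lsingle i

/-- On the dual DM(λ): e·v_i* = i v_{i-1}*. -/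
noncomputable def Ed : (ℕ →₀ ℂ) →ₗ[ℂ] (ℕ →₀ ℂ) :=
  Finsupp.lsum ℂ fun i => (i : ℂ) • Finsupp.lsingle (i - 1)

/-- On the dual DM(λ): f·v_i* = (λ-i) v_{i+1}*. -/
noncomputable def Fd (lam : ℂ) : (ℕ →₀ ℂ) →ₗ[ℂ] (ℕ →₀ ℂ) :=
  Finsupp.lsum ℂ fun i => (lam - i) • Finsupp.lsingle (i + 1)

/-- Generalized binomial coefficient C(λ,i) = λ(λ-1)⋯(λ-i+1)/i!. -/
noncomputable def gbinom (lam : ℂ) (i : ℕ) : ℂ :=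
  (∏ j ∈ Finset.range i, (lam - j)) / (Nat.factorial i : ℂ)

/-- φ_λ(v_i) = C(λ,i) v_i*. -/
noncomputable def phiMap (lam : ℂ) : (ℕ →₀ ℂ) →ₗ[ℂ] (ℕ →₀ ℂ) :=
  Finsupp.lsum ℂ fun i => gbinom lam i • Finsupp.lsingle i

/-- ψ_λ(v_i*) = 0 for i ≤ λ, (-1)^i C(i,i-λ-1) v_i for i > λ. -/
noncomputable def psiMap (n : ℕ) : (ℕ →₀ ℂ) →ₗ[ℂ] (ℕ →₀ ℂ) :=
  Finsupp.lsum ℂ fun i =>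
    (if i ≤ n then (0 : ℂ) else (-1) ^ i * (Nat.choose i (i - n - 1) : ℂ)) • Finsupp.lsingle i

/-!
All five operators are diagonal or shift the index by one, so the relations can be checked on
basis vectors. Writing `ψ(v_i*) = (-1)^i C(i, n+1) v_i`, the `h`-relation is immediate and the
`e`- and `f`-relations both reduce to the neighbouring-coefficient identity
`C(i+1, n+1) (i - n) = (i+1) C(i, n+1)`.
-/

open Finsupp

theorem lsum_smul_lsingle_single {R α β : Type*} [CommSemiring R] (c : α → R) (σ : α → β)
    (i : α) (x : R) :
    lsum R (fun j => c j • (lsingle (σ j) : R →ₗ[R] β →₀ R)) (single i x) =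
      single (σ i) (c i * x) := by
  simp [smul_single]

theorem Nat.cast_succ_choose_mul_sub {R : Type*} [CommRing R] (i k : ℕ) :
    ((i + 1).choose (k + 1) : R) * (i - k) = (i + 1) * i.choose (k + 1) := by
  have h := Nat.choose_mul_succ_eq i (k + 1)
  rcases Nat.lt_or_ge i k with hik | hki
  · simp [Nat.choose_eq_zero_of_lt (show i + 1 < k + 1 by omega),
      Nat.choose_eq_zero_of_lt (show i < k + 1 by omega)]
  · rw [show i + 1 - (k + 1) = i - k by omega] at h
    have := congrArg (Nat.cast : ℕ → R) h
    push_cast [Nat.cast_sub hki] at this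
    linear_combination -this

/-- `i.choose (n + 1)` vanishes for `i ≤ n` and equals `i.choose (i - n - 1)` otherwise, so this
is the coefficient of `psiMap n` without the case split. -/
noncomputable def psiCoeff (n i : ℕ) : ℂ :=
  (-1) ^ i * (i.choose (n + 1) : ℂ)

theorem psiCoeff_succ_mul (n i : ℕ) :
    psiCoeff n (i + 1) * ((n : ℂ) - i) = ((i : ℂ) + 1) * psiCoeff n i := by
  unfold psiCoeff
  linear_combination (-1 : ℂ) ^ i * Nat.cast_succ_choose_mul_sub (R := ℂ) i n

theorem psiMap_single (n i : ℕ) (x : ℂ) :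
    psiMap n (single i x) = single i (psiCoeff n i * x) := by
  rw [psiMap, lsum_smul_lsingle_single, psiCoeff]
  congr 2
  split_ifs with h
  · simp [Nat.choose_eq_zero_of_lt (Nat.lt_succ_of_le h)]
  · rw [Nat.sub_sub, Nat.choose_symm (by omega)]

theorem Ed_single_zero (x : ℂ) : Ed (single 0 x) = 0 := by
  simp [Ed]

theorem Ed_single_succ (i : ℕ) (x : ℂ) :
    Ed (single (i + 1) x) = single i (((i : ℂ) + 1) * x) := by
  simp [Ed, smul_single]

theorem Eop_single_zero (lam : ℂ) (x : ℂ) : Eop lam (single 0 x) = 0 := by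
  simp [Eop]

theorem Eop_single_succ (lam : ℂ) (i : ℕ) (x : ℂ) :
    Eop lam (single (i + 1) x) = single i ((lam - i) * x) := by
  simp [Eop, smul_single]

theorem Fd_single (lam : ℂ) (i : ℕ) (x : ℂ) :
    Fd lam (single i x) = single (i + 1) ((lam - i) * x) :=
  lsum_smul_lsingle_single _ _ i x

theorem Fop_single (i : ℕ) (x : ℂ) :
    Fop (single i x) = single (i + 1) (((i : ℂ) + 1) * x) :=
  lsum_smul_lsingle_single _ _ i x

theorem Hop_single (lam : ℂ) (i : ℕ) (x : ℂ) :
    Hop lam (single i x) = single i ((lam - 2 * i) * x) :=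
  lsum_smul_lsingle_single _ _ i x

theorem psiMap_comp_Ed (n : ℕ) : psiMap n ∘ₗ Ed = Eop (n : ℂ) ∘ₗ psiMap n := by
  refine lhom_ext fun i x => ?_
  rcases i with _ | i
  · simp only [LinearMap.comp_apply, Ed_single_zero, map_zero, psiMap_single, Eop_single_zero]
  · simp only [LinearMap.comp_apply, Ed_single_succ, psiMap_single, Eop_single_succ]
    congr 1
    linear_combination -x * psiCoeff_succ_mul n i

theorem psiMap_comp_Fd (n : ℕ) : psiMap n ∘ₗ Fd (n : ℂ) = Fop ∘ₗ psiMap n := by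
  refine lhom_ext fun i x => ?_
  simp only [LinearMap.comp_apply, Fd_single, psiMap_single, Fop_single]
  congr 1
  linear_combination x * psiCoeff_succ_mul n i

theorem psiMap_comp_Hop (n : ℕ) :
    psiMap n ∘ₗ Hop (n : ℂ) = Hop (n : ℂ) ∘ₗ psiMap n := by
  refine lhom_ext fun i x => ?_
  simp only [LinearMap.comp_apply, Hop_single, psiMap_single]
  congr 1
  ring

/-- For λ = n ∈ ℕ, the map ψ_n : DM(n) → M(n), v_i* ↦ 0 (i ≤ n),
v_i* ↦ (-1)^i C(i,i-n-1) v_i (i ≥ n+1), is a homomorphism of sl₂-modules. -/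
theorem psi_is_sl2_hom (n : ℕ) :
    psiMap n ∘ₗ Ed = Eop (n : ℂ) ∘ₗ psiMap n ∧
    psiMap n ∘ₗ Fd (n : ℂ) = Fop ∘ₗ psiMap n ∧
    psiMap n ∘ₗ Hop (n : ℂ) = Hop (n : ℂ) ∘ₗ psiMap n :=
  ⟨psiMap_comp_Ed n, psiMap_comp_Fd n, psiMap_comp_Hop n⟩
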